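/- No finite projective plane is magic over any finite cyclic group: if Π = (P, 𝓛) is a finite projective plane of order n and m ≥ 1 is a natural number, then there is no injective line-invariant function v : P → ℤ/mℤ. -/

import Mathlib

/-!
Counting the lines through a point `p` twice, the sum of the `n + 1` (equal) line sums through `p`
is `∑ x, v x + n • v p`, since `p` lies on all of them and every other point on exactly one.
Hence `n • v p` does not depend on `p`, so `p ↦ v p - v p₀` embeds the `n² + n + 1` points into
the `n`-torsion of `ZMod m`, which has at most `n` elements because the group is cyclic.
-/

open Configuration

/-- The sum of `v` over the points of the line `l`. -/
noncomputable def lineSum {P L G : Type*} [Membership P L] [AddCommMonoid G]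
    (v : P → G) (l : L) : G :=
  ∑ᶠ x ∈ {x : P | x ∈ l}, v x

/-- `v : P → G` is line invariant if its sum along every line of `L` is the same. -/
def LineInvariant (P L : Type*) {G : Type*} [Membership P L] [AddCommMonoid G]
    (v : P → G) : Prop :=
  ∀ l l' : L, lineSum v l = lineSum v l'

open Finset

section

open scoped Classical

variable {P L G : Type*} [Membership P L] [Fintype P]

theorem lineSum_eq_sum [AddCommMonoid G] (v : P → G) (l : L) :
    lineSum v l = ∑ x with x ∈ l, v x := by
  rw [lineSum, ← finsum_mem_coe_finset, coe_filter]
  simp only [mem_univ, true_and]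

theorem ProjectivePlane.card_lines_through [Fintype L] [ProjectivePlane P L] (p : P) :
    #{l : L | p ∈ l} = ProjectivePlane.order P L + 1 := by
  rw [← ProjectivePlane.lineCount_eq (L := L) p, lineCount, Nat.card_eq_fintype_card,
    Fintype.card_subtype]

theorem ProjectivePlane.card_lines_through_pair [Fintype L] [ProjectivePlane P L] (p q : P) :
    #{l : L | p ∈ l ∧ q ∈ l} = if q = p then ProjectivePlane.order P L + 1 else 1 := by
  split_ifs with hqp
  · simp only [hqp, and_self, card_lines_through]
  · exact (Fintype.existsUnique_iff_card_one _).1 <|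
      HasLines.existsUnique_line P L p q (Ne.symm hqp)

theorem ProjectivePlane.sum_lineSum_lines_through [Fintype L] [AddCommMonoid G]
    [ProjectivePlane P L] (v : P → G) (p : P) :
    ∑ l : L with p ∈ l, lineSum v l = ∑ x, v x + ProjectivePlane.order P L • v p := by
  calc ∑ l : L with p ∈ l, lineSum v l
      = ∑ x, #{l : L | p ∈ l ∧ x ∈ l} • v x := by
        simp_rw [lineSum_eq_sum, ← sum_const]
        exact sum_comm' fun l x => by simp
    _ = ∑ x, (v x + if x = p then ProjectivePlane.order P L • v p else 0) := by
        refine sum_congr rfl fun x _ => ?_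
        rw [card_lines_through_pair]
        split_ifs with h
        · rw [h, add_smul, one_smul, add_comm]
        · rw [one_smul, add_zero]
    _ = ∑ x, v x + ProjectivePlane.order P L • v p := by
        rw [sum_add_distrib, sum_ite_eq' univ p, if_pos (mem_univ p)]

theorem LineInvariant.order_nsmul_eq [Fintype L] [AddCancelCommMonoid G] [ProjectivePlane P L]
    {v : P → G} (hv : LineInvariant P L v) (p q : P) :
    ProjectivePlane.order P L • v p = ProjectivePlane.order P L • v q := by
  obtain ⟨-, -, -, l₀, -⟩ := ProjectivePlane.exists_config (P := P) (L := L)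
  have h (x : P) : ∑ y, v y + ProjectivePlane.order P L • v x =
      (ProjectivePlane.order P L + 1) • lineSum v l₀ := by
    rw [← ProjectivePlane.sum_lineSum_lines_through, sum_congr rfl fun l _ => hv l l₀, sum_const,
      ProjectivePlane.card_lines_through]
  exact add_left_cancel ((h p).trans (h q).symm)

end

theorem Function.Injective.card_le_card_nsmul_eq_zero {P G : Type*} [Fintype P]
    [AddCommGroup G] [Fintype G] [DecidableEq G] {v : P → G} (hv : Function.Injective v) {k : ℕ}
    (hk : ∀ p q, k • v p = k • v q) : Fintype.card P ≤ #{a : G | k • a = 0} := by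
  cases isEmpty_or_nonempty P with
  | inl _ => simp
  | inr h =>
    obtain ⟨p₀⟩ := h
    refine card_le_card_of_injOn (fun p => v p - v p₀) (fun p _ => ?_) fun p _ q _ hpq => ?_
    · simp [smul_sub, hk p p₀]
    · exact hv (sub_left_injective hpq)

theorem stmt_5_general {P L : Type*} [Membership P L] [Fintype P] [Fintype L]
    [ProjectivePlane P L] (m : ℕ) (hm : 1 ≤ m) :
    ¬ ∃ v : P → ZMod m, Function.Injective v ∧ LineInvariant P L v := by
  have : NeZero m := NeZero.of_pos hm
  rintro ⟨v, hv, hline⟩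
  have hle := (hv.card_le_card_nsmul_eq_zero hline.order_nsmul_eq).trans
    (IsAddCyclic.card_nsmul_eq_zero_le (ProjectivePlane.one_lt_order P L).pos)
  rw [ProjectivePlane.card_points P L] at hle
  linarith [Nat.zero_le (ProjectivePlane.order P L ^ 2)]

/-- No finite projective plane is magic over a finite cyclic group: there is no injective
line-invariant function `v : P → ℤ/mℤ`. -/
theorem stmt_5 {P L : Type*} [Membership P L] [Fintype P] [Fintype L]
    [ProjectivePlane P L] {n : ℕ} (hn : ProjectivePlane.order P L = n)
    (m : ℕ) (hm : 1 ≤ m) :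
    ¬ ∃ v : P → ZMod m, Function.Injective v ∧ LineInvariant P L v :=
  stmt_5_general m hm
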